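/- Let H be a finite simple graph such that 1 is a simple eigenvalue of its adjacency matrix A_H (the eigenspace for eigenvalue 1 is one-dimensional) and −1 is not an eigenvalue of A_H. Then the Cartesian product G = K_2 □ H satisfies the ACK property. -/

import Mathlib

/-!
The witness is the all-ones vector `𝟙`, which is not a row of any adjacency matrix because rows
vanish on the diagonal. Since `-1` is not an eigenvalue of `A_H`, there is `z` with
`(A_H + I) z = 𝟙`, and `A_{K₂ □ H} = [[A_H, I], [I, A_H]]` maps `(z, z)` to `𝟙`; as adjacency
matrices are symmetric, this puts `𝟙` in the row space.
-/

open SimpleGraph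

/-- A graph `G` satisfies the ACK property if there is a nonzero `{0,1}`-vector in the row
space of its adjacency matrix `A_G` (over `ℝ`) that is not equal to any row of `A_G`. -/
def AckProp {V : Type} [Fintype V] (G : SimpleGraph V) [DecidableRel G.Adj] : Prop :=
  ∃ y : V → ℝ, y ≠ 0 ∧ (∀ v, y v = 0 ∨ y v = 1) ∧
    y ∈ Submodule.span ℝ (Set.range fun i => (G.adjMatrix ℝ) i) ∧
    ∀ i, y ≠ (G.adjMatrix ℝ) i

noncomputable instance {α β : Type} (G : SimpleGraph α) (H : SimpleGraph β) :
    DecidableRel (G □ H).Adj := Classical.decRel _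

open Matrix

theorem Matrix.surjective_mulVec_add_self {n K : Type*} [Fintype n] [DecidableEq n] [Field K]
    {M : Matrix n n K} (h : ∀ x, M *ᵥ x = -x → x = 0) :
    Function.Surjective fun z : n → K => M *ᵥ z + z := by
  have hinj : Function.Injective (M.mulVecLin + LinearMap.id : (n → K) →ₗ[K] n → K) := by
    rw [← LinearMap.ker_eq_bot, LinearMap.ker_eq_bot']
    exact fun x hx => h x (eq_neg_of_add_eq_zero_left hx)
  exact LinearMap.injective_iff_surjective.mp hinj

theorem nonempty_of_finrank_submodule_pos {V K : Type*} [Field K] {S : Submodule K (V → K)}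
    (h : 0 < Module.finrank K S) : Nonempty V := by
  have := Module.nontrivial_of_finrank_pos h
  obtain ⟨x, hx⟩ := exists_ne (0 : S)
  obtain ⟨v, -⟩ := Function.ne_iff.mp (Subtype.coe_ne_coe.mpr hx)
  exact ⟨v⟩

namespace SimpleGraph

theorem adjMatrix_mulVec_mem_span_rows {V R : Type*} [Fintype V] [CommSemiring R]
    (G : SimpleGraph V) [DecidableRel G.Adj] (x : V → R) :
    G.adjMatrix R *ᵥ x ∈ Submodule.span R (Set.range fun i => G.adjMatrix R i) := by
  have hsymm : G.adjMatrix R *ᵥ x = x ᵥ* G.adjMatrix R := by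
    rw [← mulVec_transpose, transpose_adjMatrix]
  rw [hsymm]
  exact (range_vecMulLinear _).le (LinearMap.mem_range_self _ x)

theorem adjMatrix_row_ne_one {V R : Type*} [Zero R] [One R] [NeZero (1 : R)]
    (G : SimpleGraph V) [DecidableRel G.Adj] (i : V) : G.adjMatrix R i ≠ 1 :=
  fun h => by simpa using congrFun h i

theorem ackProp_of_adjMatrix_mulVec_eq_one {V : Type} [Fintype V] [Nonempty V]
    (G : SimpleGraph V) [DecidableRel G.Adj] {x : V → ℝ} (hx : G.adjMatrix ℝ *ᵥ x = 1) :
    AckProp G :=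
  ⟨1, one_ne_zero, fun _ => Or.inr rfl, hx ▸ G.adjMatrix_mulVec_mem_span_rows x,
    fun i => (G.adjMatrix_row_ne_one i).symm⟩

theorem adjMatrix_boxProd_mulVec_comp_snd {α β R : Type*} [Fintype α] [Fintype β]
    [NonAssocSemiring R] (G : SimpleGraph α) (H : SimpleGraph β) [DecidableRel G.Adj]
    [DecidableRel H.Adj] [DecidableRel (G □ H).Adj] (x : β → R) :
    (G □ H).adjMatrix R *ᵥ (x ∘ Prod.snd) =
      fun p => G.degree p.1 • x p.2 + (H.adjMatrix R *ᵥ x) p.2 := by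
  ext ⟨a, b⟩
  rw [adjMatrix_mulVec_apply, neighborFinset_boxProd, Finset.sum_disjUnion,
    Finset.sum_product, Finset.sum_product, adjMatrix_mulVec_apply]
  simp [← card_neighborFinset_eq_degree]

end SimpleGraph

theorem ackProp_boxProd_K2 {V : Type} [Fintype V] [DecidableEq V]
    (H : SimpleGraph V) [DecidableRel H.Adj]
    (h1 : Module.finrank ℝ ↥(LinearMap.ker (H.adjMatrix ℝ - 1).mulVecLin) = 1)
    (h2 : ∀ x : V → ℝ, (H.adjMatrix ℝ).mulVec x = -x → x = 0) :
    AckProp ((⊤ : SimpleGraph (Fin 2)) □ H) := by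
  have : Nonempty V := nonempty_of_finrank_submodule_pos (h1 ▸ Nat.one_pos)
  obtain ⟨z, hz⟩ := Matrix.surjective_mulVec_add_self h2 1
  refine ackProp_of_adjMatrix_mulVec_eq_one _ (x := z ∘ Prod.snd) ?_
  rw [adjMatrix_boxProd_mulVec_comp_snd]
  ext ⟨i, v⟩
  have hdeg : (⊤ : SimpleGraph (Fin 2)).degree i = 1 := by simp
  simpa [hdeg, add_comm] using congrFun hz v
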